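/- arXiv:2009.03747 — 9 statements merged into one kernel-verified Lean document; each statement's English description precedes it below -/
import Mathlib

section
/- If a finite multigraph (self-loops allowed) has degree sequence (d_1,...,d_n) with (1/2)·Σ d_i ≥ max_i d_i, then every self-loop can be eliminated by degree-preserving edge switches: there exists a loopless multigraph with the same degree sequence. -/
/-!
Only the degree sequence matters: by the handshake lemma it has even sum, and any sequence `d`
with even sum and `2 * d v ≤ ∑ d` for all `v` is the degree sequence of a loopless multigraph.
For the latter, join a vertex `v` of maximum degree to a vertex `w` of maximum degree among the
others and recurse on `d - 𝟙_v - 𝟙_w`, which satisfies the same two conditions.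
-/

/-- Degree of vertex `v` in a loopless multigraph given as a multiset of edges. -/
def mdeg {n : ℕ} (M : Multiset (Sym2 (Fin n))) (v : Fin n) : ℕ :=
  Multiset.countP (fun e => v ∈ e) M

/-- Degree of vertex `v` in a multigraph possibly containing self-loops:
a self-loop at `v` contributes 2, any other incident edge contributes 1. -/
def ldeg {n : ℕ} (M : Multiset (Sym2 (Fin n))) (v : Fin n) : ℕ :=
  (M.map (fun e => if e = Sym2.diag v then 2 else if v ∈ e then 1 else 0)).sum

section

variable {n : ℕ}

lemma ldeg_summand_mk (a b v : Fin n) :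
    (if s(a, b) = Sym2.diag v then 2 else if v ∈ s(a, b) then 1 else 0) =
      (Pi.single a 1 : Fin n → ℕ) v + (Pi.single b 1 : Fin n → ℕ) v := by
  simp only [Sym2.diag, Sym2.eq_iff, Sym2.mem_iff, Pi.single_apply]
  split_ifs <;> grind

lemma sum_ldeg (M : Multiset (Sym2 (Fin n))) : ∑ v, ldeg M v = 2 * Multiset.card M := by
  have hedge : ∀ e : Sym2 (Fin n),
      ∑ v, (if e = Sym2.diag v then 2 else if v ∈ e then 1 else 0) = 2 := by
    refine Sym2.ind fun a b => ?_
    simp only [ldeg_summand_mk, Finset.sum_add_distrib, Fintype.sum_pi_single']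
  simp only [ldeg, ← Multiset.sum_map_sum, hedge, Multiset.map_const', Multiset.sum_replicate,
    smul_eq_mul, mul_comm]

lemma mdeg_cons_mk (M : Multiset (Sym2 (Fin n))) {v w : Fin n} (hvw : v ≠ w) :
    mdeg (s(v, w) ::ₘ M) = mdeg M + Pi.single v 1 + Pi.single w 1 := by
  funext u
  simp only [mdeg, Multiset.countP_cons, Sym2.mem_iff, Pi.add_apply, Pi.single_apply]
  split_ifs <;> grind

lemma sum_add_single_add_single (d : Fin n → ℕ) (v w : Fin n) :
    ∑ u, (d + Pi.single v 1 + Pi.single w 1 : Fin n → ℕ) u = ∑ u, d u + 2 := by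
  simp only [Pi.add_apply, Finset.sum_add_distrib, Fintype.sum_pi_single']

lemma exists_ne_of_two_mul_le_sum (d : Fin n → ℕ) (hpos : 0 < ∑ i, d i)
    (hmax : ∀ v, 2 * d v ≤ ∑ i, d i) :
    ∃ v w, v ≠ w ∧ 0 < d w ∧ (∀ u, d u ≤ d v) ∧ ∀ u ≠ v, d u ≤ d w := by
  obtain ⟨i, -, hi⟩ := Finset.exists_ne_zero_of_sum_ne_zero hpos.ne'
  obtain ⟨v, -, hv⟩ := Finset.exists_max_image Finset.univ d ⟨i, Finset.mem_univ i⟩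
  have hrest : ∑ u ∈ Finset.univ.erase v, d u ≠ 0 := by
    have := Finset.add_sum_erase Finset.univ d (Finset.mem_univ v)
    have := hmax v
    omega
  obtain ⟨u, hu, hdu⟩ := Finset.exists_ne_zero_of_sum_ne_zero hrest
  obtain ⟨w, hw, hwmax⟩ := Finset.exists_max_image (Finset.univ.erase v) d ⟨u, hu⟩
  refine ⟨v, w, (Finset.ne_of_mem_erase hw).symm, ?_, fun x => hv x (Finset.mem_univ x),
    fun x hx => hwmax x (Finset.mem_erase.mpr ⟨hx, Finset.mem_univ x⟩)⟩
  have := hwmax u hu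
  omega

lemma exists_eq_add_single_add_single (d : Fin n → ℕ) (heven : Even (∑ i, d i))
    (hpos : 0 < ∑ i, d i) (hmax : ∀ v, 2 * d v ≤ ∑ i, d i) :
    ∃ (d' : Fin n → ℕ) (v w : Fin n), v ≠ w ∧ d = d' + Pi.single v 1 + Pi.single w 1 ∧
      ∀ u, 2 * d' u ≤ ∑ i, d' i := by
  obtain ⟨v, w, hvw, hw, hvmax, hwmax⟩ := exists_ne_of_two_mul_le_sum d hpos hmax
  have hv : 0 < d v := hw.trans_le (hvmax w)
  set d' : Fin n → ℕ := d - Pi.single v 1 - Pi.single w 1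
  have hd : d = d' + Pi.single v 1 + Pi.single w 1 := by
    funext u
    simp only [d', Pi.add_apply, Pi.sub_apply, Pi.single_apply]
    split_ifs <;> grind
  have hsum := sum_add_single_add_single d' v w
  rw [← hd] at hsum
  refine ⟨d', v, w, hvw, hd, fun u => ?_⟩
  have hu := congrFun hd u
  simp only [Pi.add_apply, Pi.single_apply] at hu
  by_cases huv : u = v
  · have := hmax v
    subst huv
    simp only [if_true, hvw, if_false] at hu
    omega
  by_cases huw : u = w
  · have := hmax w
    subst huw
    simp only [if_true, huv, if_false] at hu
    omega
  · -- `d u ≤ d w ≤ d v` gives `3 * d u ≤ ∑ d`, and parity supplies the missing `2` when `d u = 1`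
    have h3 : d v + d w + d u ≤ ∑ i, d i := by
      have := Finset.sum_le_sum_of_subset (f := d) (Finset.subset_univ {v, w, u})
      rwa [Finset.sum_insert (by simp [hvw, Ne.symm huv]),
        Finset.sum_pair (Ne.symm huw), ← add_assoc] at this
    have := hvmax u
    have := hwmax u huv
    obtain ⟨k, hk⟩ := heven
    simp only [huv, huw, if_false] at hu
    omega

theorem exists_loopless_mdeg_eq (d : Fin n → ℕ) (heven : Even (∑ i, d i))
    (hmax : ∀ v, 2 * d v ≤ ∑ i, d i) :
    ∃ M : Multiset (Sym2 (Fin n)), (∀ e ∈ M, ¬ e.IsDiag) ∧ mdeg M = d := by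
  generalize hN : ∑ i, d i = N at heven hmax
  induction N using Nat.strong_induction_on generalizing d with
  | _ N ih =>
  rcases N.eq_zero_or_pos with rfl | hpos
  · refine ⟨0, by simp, funext fun v => ?_⟩
    simp [mdeg, Finset.sum_eq_zero_iff.mp hN v (Finset.mem_univ v)]
  subst hN
  obtain ⟨d', v, w, hvw, rfl, hmax'⟩ := exists_eq_add_single_add_single d heven hpos hmax
  rw [sum_add_single_add_single] at heven ih
  obtain ⟨M, hloop, hdeg⟩ :=
    ih _ (Nat.lt_add_of_pos_right two_pos) d' rfl ((Nat.even_add.mp heven).mpr even_two) hmax'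
  refine ⟨s(v, w) ::ₘ M, Multiset.forall_mem_cons.mpr ⟨?_, hloop⟩, by rw [mdeg_cons_mk M hvw, hdeg]⟩
  exact fun h => hvw (Sym2.mk_isDiag_iff.mp h)

end

/-- If a finite multigraph (self-loops allowed) has degree sequence with
half-sum at least the maximum degree, then there is a loopless multigraph
with the same degree sequence (every self-loop can be eliminated by
degree-preserving edge switches). -/
theorem stmt1 {n : ℕ} (M : Multiset (Sym2 (Fin n)))
    (h : ∀ v, 2 * ldeg M v ≤ ∑ i, ldeg M i) :
    ∃ M' : Multiset (Sym2 (Fin n)),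
      (∀ e ∈ M', ¬ e.IsDiag) ∧ ∀ v, mdeg M' v = ldeg M v := by
  obtain ⟨M', hloop, hdeg⟩ :=
    exists_loopless_mdeg_eq (ldeg M) (by rw [sum_ldeg]; exact even_two_mul _) h
  exact ⟨M', hloop, congrFun hdeg⟩
end

section
/- If a graph G has two connected components C_1 and C_2 with vertex counts n_1, n_2 and edge counts m_1, m_2 satisfying m_1 + m_2 ≥ n_1 + n_2 − 1, then one of the components contains a cycle edge, and switching that cycle edge with any edge of the other component (replacing edges (a,b) in one component and (c,d) in the other by (a,c) and (b,d)) yields a graph with the same degree sequence in which the two components are merged into one connected component, without creating multi-edges. -/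
/-!
If every edge inside a component were a bridge, the component would induce a tree,
so `m₁ + m₂ ≥ n₁ + n₂ - 1` forces an edge `ab` of some component `D` to lie on a cycle. Let `cd`
be an edge of the other component `E`. The switched graph keeps every edge of `G` except `ab`
and `cd`. A path from `a` to `b` avoiding `ab` stays in `D`, so it survives the switch, and then
`cd` is replaced by the path `c – a ⋯ b – d`; hence the switched graph connects everything `G`
connected, and the new edge `ac` joins `D` to `E`. Degrees are preserved because each of
`a, b, c, d` loses one neighbour and gains one that is new, there being no edges between `D`
and `E`.
-/

namespace SimpleGraph

variable {V : Type*} {G H : SimpleGraph V} {a b c d u v x y : V}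

lemma reachable_le_of_forall_adj (h : ∀ ⦃u v⦄, G.Adj u v → H.Reachable u v) :
    G.Reachable ≤ H.Reachable := by
  intro x y hxy
  rw [reachable_iff_reflTransGen] at hxy ⊢
  exact Relation.ReflTransGen.lift' id
    (fun u v huv => (reachable_iff_reflTransGen u v).mp (h huv)) x y hxy

lemma Reachable.deleteEdges_of_not_reachable (h : G.Reachable x y) (hu : ¬G.Reachable x u) :
    (G.deleteEdges {s(u, v)}).Reachable x y := by
  classical
  obtain ⟨p⟩ := h
  refine ⟨p.toDeleteEdges _ fun e he hmem => hu ?_⟩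
  rw [Set.mem_singleton_iff] at hmem
  subst hmem
  exact ⟨p.takeUntil u (p.fst_mem_support_of_mem_edges he)⟩

lemma reachable_le_reachable_deleteEdges (hab : (G.deleteEdges {s(a, b)}).Reachable a b) :
    G.Reachable ≤ (G.deleteEdges {s(a, b)}).Reachable :=
  reachable_le_of_forall_adj fun u v huv => by
    by_cases he : s(u, v) = s(a, b)
    · rcases Sym2.eq_iff.mp he with ⟨rfl, rfl⟩ | ⟨rfl, rfl⟩
      exacts [hab, hab.symm]
    · exact (deleteEdges_adj.mpr ⟨huv, he⟩).reachable

def edgeSwitch (G : SimpleGraph V) (a b c d : V) : SimpleGraph V :=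
  fromEdgeSet ((G.edgeSet \ {s(a, b), s(c, d)}) ∪ {s(a, c), s(b, d)})

lemma edgeSwitch_swap : G.edgeSwitch b a d c = G.edgeSwitch a b c d := by
  ext u v
  simp only [edgeSwitch, fromEdgeSet_adj]
  grind

lemma edgeSwitch_comm : G.edgeSwitch c d a b = G.edgeSwitch a b c d := by
  ext u v
  simp only [edgeSwitch, fromEdgeSet_adj]
  grind

lemma deleteEdges_le_edgeSwitch : G.deleteEdges {s(a, b), s(c, d)} ≤ G.edgeSwitch a b c d := by
  intro u v h
  simp only [deleteEdges_adj, edgeSwitch, fromEdgeSet_adj] at h ⊢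
  exact ⟨Or.inl ⟨h.1, h.2⟩, h.1.ne⟩

lemma edgeSwitch_adj_left (hac : a ≠ c) : (G.edgeSwitch a b c d).Adj a c := by
  simp [edgeSwitch, hac]

lemma edgeSwitch_adj_right (hbd : b ≠ d) : (G.edgeSwitch a b c d).Adj b d :=
  edgeSwitch_swap (G := G) ▸ edgeSwitch_adj_left hbd

lemma neighborSet_edgeSwitch_left (hab : a ≠ b) (hac : a ≠ c) (had : a ≠ d) :
    (G.edgeSwitch a b c d).neighborSet a = insert c (G.neighborSet a \ {b}) := by
  ext w
  simp only [edgeSwitch, mem_neighborSet, fromEdgeSet_adj, Set.mem_union, Set.mem_sdiff,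
    Set.mem_insert_iff, Set.mem_singleton_iff, Sym2.eq_iff, mem_edgeSet]
  grind [Adj.ne]

lemma neighborSet_edgeSwitch_of_ne (ha : v ≠ a) (hb : v ≠ b) (hc : v ≠ c) (hd : v ≠ d) :
    (G.edgeSwitch a b c d).neighborSet v = G.neighborSet v := by
  ext w
  simp only [edgeSwitch, mem_neighborSet, fromEdgeSet_adj, Set.mem_union, Set.mem_sdiff,
    Set.mem_insert_iff, Set.mem_singleton_iff, Sym2.eq_iff, mem_edgeSet]
  grind [Adj.ne]

lemma encard_neighborSet_edgeSwitch_left (hab : G.Adj a b) (hac : ¬G.Adj a c) (hac' : a ≠ c)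
    (had : a ≠ d) :
    ((G.edgeSwitch a b c d).neighborSet a).encard = (G.neighborSet a).encard := by
  rw [neighborSet_edgeSwitch_left hab.ne hac' had,
    Set.encard_insert_of_notMem fun h => hac h.1,
    Set.encard_sdiff_singleton_add_one (show b ∈ G.neighborSet a from hab)]

lemma ncard_neighborSet_edgeSwitch (hab : G.Adj a b) (hcd : G.Adj c d) (hac : ¬G.Adj a c)
    (hbd : ¬G.Adj b d) (hac' : a ≠ c) (had : a ≠ d) (hbc : b ≠ c) (hbd' : b ≠ d) (v : V) :
    ((G.edgeSwitch a b c d).neighborSet v).ncard = (G.neighborSet v).ncard := by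
  rw [Set.ncard_def, Set.ncard_def]
  congr 1
  by_cases hva : v = a
  · subst hva
    exact encard_neighborSet_edgeSwitch_left hab hac hac' had
  by_cases hvb : v = b
  · subst hvb
    rw [← edgeSwitch_swap]
    exact encard_neighborSet_edgeSwitch_left hab.symm hbd hbd' hbc
  by_cases hvc : v = c
  · subst hvc
    rw [← edgeSwitch_comm]
    exact encard_neighborSet_edgeSwitch_left hcd (fun h => hac h.symm) hac'.symm hbc.symm
  by_cases hvd : v = d
  · subst hvd
    rw [← edgeSwitch_comm, ← edgeSwitch_swap]
    exact encard_neighborSet_edgeSwitch_left hcd.symm (fun h => hbd h.symm) hbd'.symm had.symm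
  rw [neighborSet_edgeSwitch_of_ne hva hvb hvc hvd]

lemma reachable_le_reachable_edgeSwitch (hac : a ≠ c) (hbd : b ≠ d)
    (h : (G.edgeSwitch a b c d).Reachable a b) :
    G.Reachable ≤ (G.edgeSwitch a b c d).Reachable :=
  reachable_le_of_forall_adj fun u v huv => by
    by_cases he : s(u, v) = s(a, b) ∨ s(u, v) = s(c, d)
    · have hcd : (G.edgeSwitch a b c d).Reachable c d :=
        (edgeSwitch_adj_left hac).reachable.symm.trans
          (h.trans (edgeSwitch_adj_right hbd).reachable)
      rcases he with he | he <;> rcases Sym2.eq_iff.mp he with ⟨rfl, rfl⟩ | ⟨rfl, rfl⟩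
      exacts [h, h.symm, hcd, hcd.symm]
    · refine (deleteEdges_le_edgeSwitch (deleteEdges_adj.mpr ⟨huv, ?_⟩)).reachable
      simpa using he

lemma reachable_edgeSwitch_of_reachable_deleteEdges
    (h : (G.deleteEdges {s(a, b)}).Reachable a b) (hac : ¬G.Reachable a c) :
    (G.edgeSwitch a b c d).Reachable a b := by
  have := h.deleteEdges_of_not_reachable (u := c) (v := d)
    fun h' => hac (h'.mono (deleteEdges_le _))
  rw [deleteEdges_deleteEdges, Set.singleton_union] at this
  exact this.mono deleteEdges_le_edgeSwitch

lemma natCard_edgeSet_induce (s : Set V) :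
    Nat.card (G.induce s).edgeSet = {e ∈ G.edgeSet | ∀ v ∈ e, v ∈ s}.ncard := by
  have : {e ∈ G.edgeSet | ∀ v ∈ e, v ∈ s} = Sym2.map (↑) '' (G.induce s).edgeSet := by
    ext e
    constructor
    · induction e using Sym2.ind with
      | _ x y =>
        rintro ⟨he, hs⟩
        exact ⟨s(⟨x, hs x (Sym2.mem_mk_left x y)⟩, ⟨y, hs y (Sym2.mem_mk_right x y)⟩),
          he, rfl⟩
    · rintro ⟨e, he, rfl⟩
      induction e using Sym2.ind with
      | _ x y => exact ⟨he, by simp⟩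
  rw [this, Set.ncard_image_of_injective _ (Sym2.map.injective Subtype.val_injective),
    Nat.card_coe_set_eq]

lemma ConnectedComponent.exists_reachable_deleteEdges_of_ncard_supp_le [Finite V]
    (C : G.ConnectedComponent)
    (h : C.supp.ncard ≤ {e ∈ G.edgeSet | ∀ v ∈ e, v ∈ C.supp}.ncard) :
    ∃ a b, G.Adj a b ∧ a ∈ C.supp ∧ b ∈ C.supp ∧ (G.deleteEdges {s(a, b)}).Reachable a b := by
  have hcyclic : ¬C.toSimpleGraph.IsAcyclic := fun hacyc => by
    have := (isTree_iff_connected_and_card.mp ⟨C.connected_toSimpleGraph, hacyc⟩).2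
    rw [ConnectedComponent.toSimpleGraph, natCard_edgeSet_induce] at this
    change _ = C.supp.ncard at this
    omega
  obtain ⟨u, v, huv, hbr⟩ :
      ∃ u v, C.toSimpleGraph.Adj u v ∧ ¬C.toSimpleGraph.IsBridge s(u, v) := by
    simpa [isAcyclic_iff_forall_adj_isBridge] using hcyclic
  refine ⟨u, v, huv, u.2, v.2, ?_⟩
  rw [isBridge_iff, not_not, reachable_deleteEdges_iff_exists_walk] at hbr
  obtain ⟨p, hp⟩ := hbr
  rw [reachable_deleteEdges_iff_exists_walk]
  refine ⟨p.map C.toSimpleGraph_hom, fun hmem => hp ?_⟩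
  obtain ⟨e, he, heq⟩ := List.mem_map.mp (Walk.edges_map C.toSimpleGraph_hom p ▸ hmem)
  rwa [show e = s(u, v) from Sym2.map.injective Subtype.val_injective heq] at he

lemma ConnectedComponent.not_reachable_of_ne {C D : G.ConnectedComponent} (hCD : C ≠ D)
    (hu : u ∈ C.supp) (hv : v ∈ D.supp) : ¬G.Reachable u v := fun h =>
  hCD <| ((C.mem_supp_iff u).mp hu).symm.trans
    ((ConnectedComponent.sound h).trans ((D.mem_supp_iff v).mp hv))

lemma ConnectedComponent.reachable_edgeSwitch {D E : G.ConnectedComponent} (hDE : D ≠ E)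
    (ha : a ∈ D.supp) (hb : b ∈ D.supp) (hc : c ∈ E.supp) (hd : d ∈ E.supp)
    (hab : (G.deleteEdges {s(a, b)}).Reachable a b) (hx : x ∈ D.supp ∪ E.supp) :
    (G.edgeSwitch a b c d).Reachable x a := by
  have hac : a ≠ c := fun h => not_reachable_of_ne hDE ha hc (h ▸ .rfl)
  have hbd : b ≠ d := fun h => not_reachable_of_ne hDE hb hd (h ▸ .rfl)
  have hreach : G.Reachable ≤ (G.edgeSwitch a b c d).Reachable :=
    reachable_le_reachable_edgeSwitch hac hbd
      (reachable_edgeSwitch_of_reachable_deleteEdges hab (not_reachable_of_ne hDE ha hc))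
  rcases hx with hx | hx
  · exact hreach _ _ (D.reachable_of_mem_supp hx ha)
  · exact (hreach _ _ (E.reachable_of_mem_supp hx hc)).trans
      (edgeSwitch_adj_left hac).reachable.symm

end SimpleGraph

open SimpleGraph

/-- If a graph `G` has two connected components `C1`, `C2` with vertex counts
`n1, n2` and (internal) edge counts `m1, m2` satisfying `m1 + m2 ≥ n1 + n2 - 1`,
then one of the two components contains a cycle edge `(a,b)` (an edge whose
removal keeps that component connected), and switching that cycle edge with any
edge `(c,d)` of the other component — replacing `(a,b)`,`(c,d)` by `(a,c)`,`(b,d)`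
— yields a graph with the same degree sequence in which the two components are
merged into one connected component, without creating multi-edges or loops. -/
theorem stmt4 {n : ℕ} (G : SimpleGraph (Fin n))
    (C1 C2 : G.ConnectedComponent) (hne : C1 ≠ C2)
    (hcount :
      C1.supp.ncard + C2.supp.ncard - 1 ≤
        {e ∈ G.edgeSet | ∀ v ∈ e, v ∈ C1.supp}.ncard +
          {e ∈ G.edgeSet | ∀ v ∈ e, v ∈ C2.supp}.ncard) :
    ∃ D E : G.ConnectedComponent, ({D, E} : Set G.ConnectedComponent) = {C1, C2} ∧
      ∃ a b : Fin n, G.Adj a b ∧ a ∈ D.supp ∧ b ∈ D.supp ∧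
        (∀ x ∈ D.supp, ∀ y ∈ D.supp, (G.deleteEdges {s(a, b)}).Reachable x y) ∧
        ∀ c d : Fin n, G.Adj c d → c ∈ E.supp → d ∈ E.supp →
          s(a, c) ∉ G.edgeSet ∧ s(b, d) ∉ G.edgeSet ∧ a ≠ c ∧ b ≠ d ∧
          (let G' := SimpleGraph.fromEdgeSet
              ((G.edgeSet \ {s(a, b), s(c, d)}) ∪ {s(a, c), s(b, d)})
           (∀ v, (G'.neighborSet v).ncard = (G.neighborSet v).ncard) ∧
             ∀ x ∈ C1.supp ∪ C2.supp, ∀ y ∈ C1.supp ∪ C2.supp, G'.Reachable x y) := by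
  obtain ⟨D, E, hpair, hDE, a, b, hab, ha, hb, hcyc⟩ : ∃ D E : G.ConnectedComponent,
      ({D, E} : Set _) = {C1, C2} ∧ D ≠ E ∧ ∃ a b, G.Adj a b ∧ a ∈ D.supp ∧ b ∈ D.supp ∧
        (G.deleteEdges {s(a, b)}).Reachable a b := by
    by_cases h1 : C1.supp.ncard ≤ {e ∈ G.edgeSet | ∀ v ∈ e, v ∈ C1.supp}.ncard
    · exact ⟨C1, C2, rfl, hne, C1.exists_reachable_deleteEdges_of_ncard_supp_le h1⟩
    · exact ⟨C2, C1, Set.pair_comm _ _, hne.symm,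
        C2.exists_reachable_deleteEdges_of_ncard_supp_le (by omega)⟩
  have hunion : C1.supp ∪ C2.supp = D.supp ∪ E.supp := by
    rw [← Set.biUnion_pair, ← hpair, Set.biUnion_pair]
  refine ⟨D, E, hpair, a, b, hab, ha, hb,
    fun x hx y hy => reachable_le_reachable_deleteEdges hcyc _ _ (D.reachable_of_mem_supp hx hy),
    ?_⟩
  intro c d hcd hc hd
  have hsep {u w : Fin n} (hu : u ∈ D.supp) (hw : w ∈ E.supp) : ¬G.Reachable u w :=
    ConnectedComponent.not_reachable_of_ne hDE hu hw
  have hneq {u w : Fin n} (hu : u ∈ D.supp) (hw : w ∈ E.supp) : u ≠ w :=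
    fun h => hsep hu hw (h ▸ .rfl)
  have hnadj {u w : Fin n} (hu : u ∈ D.supp) (hw : w ∈ E.supp) : ¬G.Adj u w :=
    fun h => hsep hu hw h.reachable
  refine ⟨hnadj ha hc, hnadj hb hd, hneq ha hc, hneq hb hd,
    ncard_neighborSet_edgeSwitch hab hcd (hnadj ha hc) (hnadj hb hd) (hneq ha hc) (hneq ha hd)
      (hneq hb hc) (hneq hb hd), ?_⟩
  rw [hunion]
  exact fun x hx y hy =>
    (ConnectedComponent.reachable_edgeSwitch hDE ha hb hc hd hcyc hx).trans
      (ConnectedComponent.reachable_edgeSwitch hDE ha hb hc hd hcyc hy).symm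
end

section
/- A graphical degree sequence has a connected simple graph realization if and only if it has a connected realization as a loopless multigraph; equivalently, every potentially connected graphical degree sequence has a connected simple realization. -/
/-- Connectedness of a multigraph given as a multiset of edges. -/
def mConnected {n : ℕ} (M : Multiset (Sym2 (Fin n))) : Prop :=
  (SimpleGraph.fromRel (fun a b => s(a, b) ∈ M)).Connected

/-- A degree sequence is graphical if some simple graph realizes it. -/
def Graphical {m : ℕ} (d : Fin m → ℕ) : Prop :=
  ∃ G : SimpleGraph (Fin m), ∀ v, (G.neighborSet v).ncard = d v

/-!
A loopless multigraph realizing `d` with connected underlying graph has at least `n - 1` edges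
and, for `n ≥ 2`, no isolated vertex; so `∑ d ≥ 2 (n - 1)` and every `d v` is positive.
Conversely, let `G` be a disconnected simple realization of such a `d`. It has at least `n - 1`
edges, so it is not a forest and some edge `xy` lies on a cycle. Take an edge `uv` in another
component: the 2-switch replacing `xy, uv` by `xu, yv` preserves all degrees and strictly
enlarges the reachability relation, because `x` and `y` stay joined along the cycle. Repeating
this ends in a connected realization.
-/

namespace SimpleGraph

variable {V : Type*} {G G' : SimpleGraph V}

lemma reachable_le_of_adj_reachable (h : ∀ a b, G.Adj a b → G'.Reachable a b) :
    G.Reachable ≤ G'.Reachable := by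
  rw [reachable_eq_reflTransGen]
  exact Relation.reflTransGen_le_of_equivalence_of_le G'.reachable_is_equivalence h

lemma compl_adj_of_not_reachable {a b : V} (h : ¬G.Reachable a b) : Gᶜ.Adj a b :=
  ⟨by rintro rfl; exact h .rfl, fun hab ↦ h hab.reachable⟩

lemma sum_ncard_neighborSet [Fintype V] (G : SimpleGraph V) :
    ∑ v, (G.neighborSet v).ncard = 2 * Nat.card G.edgeSet := by
  classical
  have hdeg (v : V) : (G.neighborSet v).ncard = G.degree v := by
    rw [Set.ncard_eq_toFinset_card', Set.toFinset_card, card_neighborSet_eq_degree]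
  simp only [hdeg, sum_degrees_eq_twice_card_edges, edgeFinset_card, Nat.card_eq_fintype_card]

lemma card_edgeSet_sup_edge [Finite V] {a b : V} (hab : a ≠ b) (hn : ¬G.Adj a b) :
    Nat.card (G ⊔ edge a b).edgeSet = Nat.card G.edgeSet + 1 := by
  rw [Nat.card_coe_set_eq, Nat.card_coe_set_eq, edgeSet_sup, edgeSet_edge_of_ne hab,
    Set.union_singleton, Set.ncard_insert_of_notMem (by rwa [mem_edgeSet])]

lemma IsAcyclic.card_edgeSet_add_one_le [Finite V] [Nonempty V] (h : G.IsAcyclic) :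
    Nat.card G.edgeSet + 1 ≤ Nat.card V := by
  obtain ⟨T, hGT, hT⟩ := exists_maximal_isAcyclic_of_le_isAcyclic (le_top (a := G)) h
  have hTree : T.IsTree := (connected_top.maximal_le_isAcyclic_iff_isTree le_top).mp hT
  rw [← (isTree_iff_connected_and_card.mp hTree).2]
  gcongr
  exact Nat.card_mono (Set.toFinite _) (edgeSet_mono hGT)

lemma not_isAcyclic_of_not_preconnected [Finite V] (hG : ¬G.Preconnected)
    (hcard : Nat.card V ≤ Nat.card G.edgeSet + 1) : ¬G.IsAcyclic := by
  intro hac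
  obtain ⟨a, b, hab⟩ : ∃ a b, ¬G.Reachable a b := by simpa [Preconnected] using hG
  have : Nonempty V := ⟨a⟩
  have hne : a ≠ b := by rintro rfl; exact hab .rfl
  have := (hac.sup_edge_of_not_reachable hab).card_edgeSet_add_one_le
  rw [card_edgeSet_sup_edge hne fun h ↦ hab h.reachable] at this
  omega

def twoSwitch (G : SimpleGraph V) (x y u v : V) : SimpleGraph V :=
  G.deleteEdges {s(x, y), s(u, v)} ⊔ edge x u ⊔ edge y v

section twoSwitch

variable {x y u v : V}

lemma twoSwitch_swap (G : SimpleGraph V) (x y u v : V) :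
    G.twoSwitch x y u v = G.twoSwitch y x v u := by
  rw [twoSwitch, twoSwitch, Sym2.eq_swap (a := x), Sym2.eq_swap (a := u), sup_right_comm]

lemma twoSwitch_comm (G : SimpleGraph V) (x y u v : V) :
    G.twoSwitch x y u v = G.twoSwitch u v x y := by
  rw [twoSwitch, twoSwitch, Set.pair_comm, edge_comm x, edge_comm y]

lemma twoSwitch_adj_left (h : x ≠ u) : (G.twoSwitch x y u v).Adj x u := by
  simp [twoSwitch, edge_adj, h]

lemma neighborSet_twoSwitch_left (hxy : G.Adj x y) (hxu : Gᶜ.Adj x u) (hxv : x ≠ v) :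
    (G.twoSwitch x y u v).neighborSet x = insert u (G.neighborSet x \ {y}) := by
  have := hxy.ne
  obtain ⟨hxu, hnxu⟩ := hxu
  ext z
  simp only [twoSwitch, mem_neighborSet, sup_adj, deleteEdges_adj, edge_adj, Sym2.eq_iff,
    Set.mem_insert_iff, Set.mem_singleton_iff, Set.mem_sdiff]
  grind

lemma neighborSet_twoSwitch_of_ne {w : V} (hx : w ≠ x) (hy : w ≠ y) (hu : w ≠ u)
    (hv : w ≠ v) : (G.twoSwitch x y u v).neighborSet w = G.neighborSet w := by
  ext z
  simp only [twoSwitch, mem_neighborSet, sup_adj, deleteEdges_adj, edge_adj, Sym2.eq_iff,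
    Set.mem_insert_iff, Set.mem_singleton_iff]
  grind

lemma ncard_neighborSet_twoSwitch_left [Finite V] (hxy : G.Adj x y) (hxu : Gᶜ.Adj x u)
    (hxv : x ≠ v) : ((G.twoSwitch x y u v).neighborSet x).ncard = (G.neighborSet x).ncard := by
  rw [neighborSet_twoSwitch_left hxy hxu hxv, Set.ncard_insert_of_notMem fun h ↦ hxu.2 h.1,
    Set.ncard_sdiff_singleton_add_one (show y ∈ G.neighborSet x from hxy)]

lemma ncard_neighborSet_twoSwitch [Finite V] (hxy : G.Adj x y) (huv : G.Adj u v)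
    (hxu : Gᶜ.Adj x u) (hyv : Gᶜ.Adj y v) (w : V) :
    ((G.twoSwitch x y u v).neighborSet w).ncard = (G.neighborSet w).ncard := by
  have hxv : x ≠ v := by rintro rfl; exact hxu.2 huv.symm
  have hyu : y ≠ u := by rintro rfl; exact hxu.2 hxy
  rcases eq_or_ne w x with rfl | hwx
  · exact ncard_neighborSet_twoSwitch_left hxy hxu hxv
  rcases eq_or_ne w y with rfl | hwy
  · rw [twoSwitch_swap]
    exact ncard_neighborSet_twoSwitch_left hxy.symm hyv hyu
  rcases eq_or_ne w u with rfl | hwu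
  · rw [twoSwitch_comm]
    exact ncard_neighborSet_twoSwitch_left huv hxu.symm hyu.symm
  rcases eq_or_ne w v with rfl | hwv
  · rw [twoSwitch_comm, twoSwitch_swap]
    exact ncard_neighborSet_twoSwitch_left huv.symm hyv.symm hxv.symm
  rw [neighborSet_twoSwitch_of_ne hwx hwy hwu hwv]

lemma reachable_twoSwitch_left (hbr : ¬G.IsBridge s(x, y)) (hxu : ¬G.Reachable x u) :
    (G.twoSwitch x y u v).Reachable x y := by
  classical
  obtain ⟨p, hp⟩ := not_forall.mp (mt isBridge_iff_forall_walk_mem_edges.mpr hbr)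
  refine ⟨p.transfer _ fun e he ↦ ?_⟩
  refine edgeSet_mono (le_sup_left.trans le_sup_left) ?_
  rw [edgeSet_deleteEdges]
  refine ⟨p.edges_subset_edgeSet he, ?_⟩
  -- `p` stays in the component of `x`, so it cannot use the edge `uv`
  rintro (rfl | rfl)
  · exact hp he
  · exact hxu (p.takeUntil u (p.fst_mem_support_of_mem_edges he)).reachable

lemma reachable_le_reachable_twoSwitch (hxy : G.Adj x y) (hbr : ¬G.IsBridge s(x, y))
    (huv : G.Adj u v) (hxu : ¬G.Reachable x u) :
    G.Reachable ≤ (G.twoSwitch x y u v).Reachable := by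
  have hxu' : x ≠ u := by rintro rfl; exact hxu .rfl
  have hyv : y ≠ v := by rintro rfl; exact hxu (hxy.reachable.trans huv.symm.reachable)
  have hAxu : (G.twoSwitch x y u v).Adj x u := twoSwitch_adj_left hxu'
  have hAyv : (G.twoSwitch x y u v).Adj y v := by
    rw [twoSwitch_swap]
    exact twoSwitch_adj_left hyv
  have hxy' := reachable_twoSwitch_left (v := v) hbr hxu
  have huv' : (G.twoSwitch x y u v).Reachable u v :=
    (hAxu.symm.reachable.trans hxy').trans hAyv.reachable
  refine reachable_le_of_adj_reachable fun a b hab ↦ ?_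
  by_cases h1 : s(a, b) = s(x, y)
  · rcases Sym2.eq_iff.mp h1 with ⟨rfl, rfl⟩ | ⟨rfl, rfl⟩
    exacts [hxy', hxy'.symm]
  by_cases h2 : s(a, b) = s(u, v)
  · rcases Sym2.eq_iff.mp h2 with ⟨rfl, rfl⟩ | ⟨rfl, rfl⟩
    exacts [huv', huv'.symm]
  exact Adj.reachable (Or.inl (Or.inl ⟨hab, by simp [h1, h2]⟩))

end twoSwitch

lemma exists_reachable_lt_of_not_connected [Fintype V] [Nonempty V] (hG : ¬G.Connected)
    (hpos : Nontrivial V → ∀ v, (G.neighborSet v).Nonempty)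
    (hcard : Fintype.card V ≤ Nat.card G.edgeSet + 1) :
    ∃ G' : SimpleGraph V, (∀ w, (G'.neighborSet w).ncard = (G.neighborSet w).ncard) ∧
      G.Reachable < G'.Reachable := by
  have hpre : ¬G.Preconnected := fun h ↦ hG ⟨h⟩
  obtain ⟨a, b, hab⟩ : ∃ a b, ¬G.Reachable a b := by simpa [Preconnected] using hpre
  have : Nontrivial V := ⟨a, b, by rintro rfl; exact hab .rfl⟩
  obtain ⟨x, y, hxy, hbr⟩ : ∃ x y, G.Adj x y ∧ ¬G.IsBridge s(x, y) := by
    simpa [isAcyclic_iff_forall_adj_isBridge] using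
      not_isAcyclic_of_not_preconnected hpre (by simpa using hcard)
  obtain ⟨u, hxu⟩ : ∃ u, ¬G.Reachable x u := by
    by_contra! h
    exact hab ((h a).symm.trans (h b))
  obtain ⟨v, huv⟩ := hpos this u
  have hyv : ¬G.Reachable y v := fun h ↦ hxu (hxy.reachable.trans (h.trans huv.symm.reachable))
  refine ⟨G.twoSwitch x y u v, ncard_neighborSet_twoSwitch hxy huv
    (compl_adj_of_not_reachable hxu) (compl_adj_of_not_reachable hyv),
    (reachable_le_reachable_twoSwitch hxy hbr huv hxu).lt_of_ne fun h ↦ hxu ?_⟩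
  rw [h]
  exact (twoSwitch_adj_left (compl_adj_of_not_reachable hxu).ne).reachable

theorem exists_connected_of_two_mul_card_sub_one_le_sum [Fintype V] [Nonempty V] {d : V → ℕ}
    (hG : ∀ v, (G.neighborSet v).ncard = d v) (hpos : Nontrivial V → ∀ v, 0 < d v)
    (hsum : 2 * (Fintype.card V - 1) ≤ ∑ v, d v) :
    ∃ G' : SimpleGraph V, (∀ v, (G'.neighborSet v).ncard = d v) ∧ G'.Connected := by
  -- `V → V → Prop` is finite, so reachability relations cannot increase forever
  induction hR : G.Reachable using WellFoundedGT.induction generalizing G with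
  | _ R ih =>
    by_cases hc : G.Connected
    · exact ⟨G, hG, hc⟩
    have hcard : Fintype.card V ≤ Nat.card G.edgeSet + 1 := by
      have := G.sum_ncard_neighborSet
      simp only [hG] at this
      omega
    obtain ⟨G', hG', hlt⟩ := exists_reachable_lt_of_not_connected hc
      (fun h v ↦ Set.nonempty_of_ncard_ne_zero ((hG v).trans_ne (hpos h v).ne')) hcard
    exact ih _ (hR ▸ hlt) (fun v ↦ (hG' v).trans (hG v)) rfl

end SimpleGraph

open SimpleGraph

lemma fromRel_mem_eq_fromEdgeSet {V : Type*} (M : Multiset (Sym2 V)) :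
    fromRel (fun a b ↦ s(a, b) ∈ M) = fromEdgeSet {e | e ∈ M} := by
  ext a b
  simp [fromRel_adj, fromEdgeSet_adj, Sym2.eq_swap (a := b), and_comm]

section Multigraph

variable {n : ℕ}

lemma mdeg_edgeFinset (G : SimpleGraph (Fin n)) [Fintype G.edgeSet] (v : Fin n) :
    mdeg G.edgeFinset.val v = (G.neighborSet v).ncard := by
  classical
  rw [mdeg, Multiset.countP_eq_card_filter, ← Finset.filter_val, Finset.card_val,
    ← incidenceFinset_eq_filter, card_incidenceFinset_eq_degree, ← card_neighborSet_eq_degree,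
    Set.ncard_eq_toFinset_card', Set.toFinset_card]

lemma mConnected_edgeFinset_iff (G : SimpleGraph (Fin n)) [Fintype G.edgeSet] :
    mConnected G.edgeFinset.val ↔ G.Connected := by
  rw [mConnected, fromRel_mem_eq_fromEdgeSet]
  simp

lemma sum_mdeg {M : Multiset (Sym2 (Fin n))} (hM : ∀ e ∈ M, ¬e.IsDiag) :
    ∑ v, mdeg M v = 2 * Multiset.card M := by
  classical
  induction M using Multiset.induction with
  | empty => simp [mdeg]
  | cons e M ih =>
    have hfilter : ({v | v ∈ e} : Finset (Fin n)) = e.toFinset := by ext; simp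
    simp only [mdeg, Multiset.countP_cons, Finset.sum_add_distrib] at ih ⊢
    rw [ih fun f hf ↦ hM f (Multiset.mem_cons_of_mem hf), Finset.sum_boole, hfilter,
      Sym2.card_toFinset_of_not_isDiag e (hM e (Multiset.mem_cons_self e M)), Multiset.card_cons]
    ring

lemma mConnected.mdeg_pos [Nontrivial (Fin n)] {M : Multiset (Sym2 (Fin n))}
    (hM : mConnected M) (v : Fin n) : 0 < mdeg M v := by
  rw [mConnected, fromRel_mem_eq_fromEdgeSet] at hM
  obtain ⟨w, hw⟩ := exists_ne v
  obtain ⟨z, hz⟩ := (hM.preconnected v w).nonempty_neighborSet_left hw.symm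
  exact Multiset.countP_pos.mpr ⟨_, hz.1, Sym2.mem_mk_left v z⟩

lemma mConnected.sub_one_le_card {M : Multiset (Sym2 (Fin n))} (hM : mConnected M) :
    n - 1 ≤ Multiset.card M := by
  classical
  rw [mConnected, fromRel_mem_eq_fromEdgeSet] at hM
  have hedges : Nat.card (fromEdgeSet {e | e ∈ M}).edgeSet ≤ Multiset.card M :=
    calc _ ≤ Nat.card (M.toFinset : Set (Sym2 (Fin n))) :=
          Nat.card_mono M.toFinset.finite_toSet <| by
            rw [edgeSet_fromEdgeSet]
            exact fun e he ↦ Multiset.mem_toFinset.mpr he.1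
      _ ≤ Multiset.card M := by
          rw [Nat.card_coe_set_eq, Set.ncard_coe_finset]
          exact M.toFinset_card_le
  have := hM.card_vert_le_card_edgeSet_add_one
  rw [Nat.card_fin] at this
  omega

end Multigraph

/-- A graphical degree sequence has a connected simple realization iff it has a
connected loopless multigraph realization (i.e. every potentially connected
graphical degree sequence has a connected simple realization). -/
theorem stmt5 {n : ℕ} (d : Fin n → ℕ) (hgr : Graphical d) :
    (∃ G : SimpleGraph (Fin n), (∀ v, (G.neighborSet v).ncard = d v) ∧ G.Connected) ↔
      (∃ M : Multiset (Sym2 (Fin n)),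
        (∀ e ∈ M, ¬ e.IsDiag) ∧ (∀ v, mdeg M v = d v) ∧ mConnected M) := by
  classical
  constructor
  · rintro ⟨G, hGd, hGc⟩
    exact ⟨G.edgeFinset.val, fun e he ↦ G.not_isDiag_of_mem_edgeSet (mem_edgeFinset.mp he),
      fun v ↦ (mdeg_edgeFinset G v).trans (hGd v), (mConnected_edgeFinset_iff G).mpr hGc⟩
  · rintro ⟨M, hMd, hMdeg, hMc⟩
    obtain ⟨G, hG⟩ := hgr
    have : Nonempty (Fin n) := hMc.nonempty
    refine exists_connected_of_two_mul_card_sub_one_le_sum hG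
      (fun _ v ↦ hMdeg v ▸ hMc.mdeg_pos v) ?_
    calc 2 * (Fintype.card (Fin n) - 1) ≤ 2 * Multiset.card M := by
          simpa using hMc.sub_one_le_card
      _ = ∑ v, d v := by simp [← sum_mdeg hMd, hMdeg]
end

section
/- Loopless multigraph construction step: Let (d_1, d_2 ≥ d_3 ≥ ... ≥ d_n) be a sequence of nonnegative integers with d_1 > 0 and d_2 the maximum among d_2,...,d_n. Then (d_1,...,d_n) is multigraphical if and only if (d_1 − 1, d_2 − 1, d_3, ..., d_n) is multigraphical. -/
/-- An integer sequence is multigraphical if some loopless multigraph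
(parallel edges allowed, no self-loops) realizes it as its degree sequence. -/
def MultigraphicalZ {m : ℕ} (d : Fin m → ℤ) : Prop :=
  ∃ M : Multiset (Sym2 (Fin m)), (∀ e ∈ M, ¬ e.IsDiag) ∧ ∀ v, (mdeg M v : ℤ) = d v

/-!
Adding the edge `s(0, 1)` to a realization of the decremented sequence realizes `d`. Conversely,
a realization of `d` can be chosen to contain `s(0, 1)`: otherwise take an edge `s(0, x)`; as
`d x ≤ d 1`, once it is removed vertex `1` still has an edge `s(1, y)` with `y ≠ x`, and replacing
`s(0, x)` and `s(1, y)` by `s(0, 1)` and `s(x, y)` changes no degree. Removing `s(0, 1)` then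
realizes the decremented sequence.
-/

open Multiset

lemma Multiset.countP_mono_left {α : Type*} {p q : α → Prop} [DecidablePred p] [DecidablePred q]
    {s : Multiset α} (h : ∀ a ∈ s, p a → q a) : s.countP p ≤ s.countP q :=
  Quot.inductionOn s (fun _ h => List.countP_mono_left (by simpa using h)) h

section

variable {m : ℕ}

lemma mdeg_cons (e : Sym2 (Fin m)) (M : Multiset (Sym2 (Fin m))) (v : Fin m) :
    mdeg (e ::ₘ M) v = mdeg M v + if v ∈ e then 1 else 0 :=
  countP_cons _ _ _

lemma mdeg_erase_add {e : Sym2 (Fin m)} {M : Multiset (Sym2 (Fin m))} (he : e ∈ M) (v : Fin m) :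
    mdeg (M.erase e) v + (if v ∈ e then 1 else 0) = mdeg M v := by
  rw [← mdeg_cons, cons_erase he]

lemma ite_mem_sym2_mk {a b : Fin m} (hab : a ≠ b) (v : Fin m) :
    (if v ∈ s(a, b) then 1 else 0 : ℕ) = (if v = a then 1 else 0) + (if v = b then 1 else 0) := by
  by_cases hva : v = a <;> by_cases hvb : v = b <;> simp_all

lemma mdeg_switch {a b x y : Fin m} (hab : a ≠ b) (hxy : x ≠ y) (hax : a ≠ x) (hby : b ≠ y)
    (N : Multiset (Sym2 (Fin m))) :
    mdeg (s(a, b) ::ₘ s(x, y) ::ₘ N) = mdeg (s(a, x) ::ₘ s(b, y) ::ₘ N) := by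
  funext v
  simp only [mdeg_cons, ite_mem_sym2_mk hab, ite_mem_sym2_mk hxy, ite_mem_sym2_mk hax,
    ite_mem_sym2_mk hby]
  omega

lemma exists_mem_of_mdeg_lt {M : Multiset (Sym2 (Fin m))} {x b : Fin m}
    (h : mdeg M x < mdeg M b) : ∃ y, s(b, y) ∈ M ∧ y ≠ x := by
  by_contra! hc
  refine h.not_ge (countP_mono_left fun e he hbe => ?_)
  obtain ⟨y, rfl⟩ := Sym2.mem_iff_exists.mp hbe
  rw [hc y he]
  exact Sym2.mem_mk_right _ _

lemma ne_of_mk_mem {M : Multiset (Sym2 (Fin m))} (hM : ∀ e ∈ M, ¬ e.IsDiag) {a b : Fin m}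
    (h : s(a, b) ∈ M) : a ≠ b :=
  Sym2.mk_isDiag_iff.not.mp (hM _ h)

lemma exists_mdeg_eq_and_mk_mem {M : Multiset (Sym2 (Fin m))} (hM : ∀ e ∈ M, ¬ e.IsDiag)
    {a b : Fin m} (hab : a ≠ b) (ha : 0 < mdeg M a) (hb : ∀ x ≠ a, mdeg M x ≤ mdeg M b) :
    ∃ M' : Multiset (Sym2 (Fin m)), (∀ e ∈ M', ¬ e.IsDiag) ∧ mdeg M' = mdeg M ∧ s(a, b) ∈ M' := by
  by_cases habM : s(a, b) ∈ M
  · exact ⟨M, hM, rfl, habM⟩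
  obtain ⟨e, hax, hae⟩ := countP_pos.mp ha
  obtain ⟨x, rfl⟩ := Sym2.mem_iff_exists.mp hae
  have hxb : x ≠ b := by rintro rfl; exact habM hax
  have hN : mdeg (M.erase s(a, x)) x < mdeg (M.erase s(a, x)) b := by
    have hx := mdeg_erase_add hax x
    have hb' := mdeg_erase_add hax b
    have := hb x (ne_of_mk_mem hM hax).symm
    simp only [Sym2.mem_mk_right, ↓reduceIte, Sym2.mem_iff, hab.symm, hxb.symm, or_self] at hx hb'
    omega
  obtain ⟨y, hby, hyx⟩ := exists_mem_of_mdeg_lt hN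
  have hbyM : s(b, y) ∈ M := mem_of_mem_erase hby
  refine ⟨s(a, b) ::ₘ s(x, y) ::ₘ (M.erase s(a, x)).erase s(b, y), ?_, ?_, mem_cons_self _ _⟩
  · simp only [mem_cons]
    rintro e (rfl | rfl | he)
    · exact Sym2.mk_isDiag_iff.not.mpr hab
    · exact Sym2.mk_isDiag_iff.not.mpr hyx.symm
    · exact hM e (mem_of_mem_erase (mem_of_mem_erase he))
  · rw [mdeg_switch hab hyx.symm (ne_of_mk_mem hM hax) (ne_of_mk_mem hM hbyM), cons_erase hby,
      cons_erase hax]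

variable {d : Fin m → ℤ} {a b : Fin m}

theorem MultigraphicalZ.of_sub_edge (hab : a ≠ b)
    (h : MultigraphicalZ fun v => d v - if v ∈ s(a, b) then 1 else 0) : MultigraphicalZ d := by
  obtain ⟨M, hM, hdeg⟩ := h
  refine ⟨s(a, b) ::ₘ M, ?_, fun v => ?_⟩
  · simp only [mem_cons]
    rintro e (rfl | he)
    · exact Sym2.mk_isDiag_iff.not.mpr hab
    · exact hM e he
  · rw [mdeg_cons]
    push_cast
    rw [hdeg]
    ring

theorem MultigraphicalZ.sub_edge (h : MultigraphicalZ d) (hab : a ≠ b) (ha : 0 < d a)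
    (hb : ∀ x ≠ a, d x ≤ d b) : MultigraphicalZ fun v => d v - if v ∈ s(a, b) then 1 else 0 := by
  obtain ⟨M, hM, hdeg⟩ := h
  obtain ⟨M', hM', hdeg', habM'⟩ := exists_mdeg_eq_and_mk_mem hM hab
    (by simpa only [← hdeg, Nat.cast_pos] using ha)
    (fun x hx => by simpa only [← hdeg, Nat.cast_le] using hb x hx)
  refine ⟨M'.erase s(a, b), fun e he => hM' e (mem_of_mem_erase he), fun v => ?_⟩
  dsimp only
  rw [← hdeg v, ← hdeg', ← mdeg_erase_add habM' v]
  push_cast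
  ring

theorem multigraphicalZ_iff_sub_edge (hab : a ≠ b) (ha : 0 < d a) (hb : ∀ x ≠ a, d x ≤ d b) :
    MultigraphicalZ d ↔ MultigraphicalZ fun v => d v - if v ∈ s(a, b) then 1 else 0 :=
  ⟨fun h => h.sub_edge hab ha hb, MultigraphicalZ.of_sub_edge hab⟩

end

theorem stmt8_general {n : ℕ} (d : Fin (n + 2) → ℤ)
    (h0 : 0 < d 0)
    (hsort : ∀ i j : Fin (n + 2), 1 ≤ i → i ≤ j → d j ≤ d i) :
    MultigraphicalZ d ↔
      MultigraphicalZ (fun i => if i = 0 then d 0 - 1 else if i = 1 then d 1 - 1 else d i) := by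
  have h01 : (0 : Fin (n + 2)) ≠ 1 := Fin.zero_ne_one
  have hmax : ∀ x ≠ 0, d x ≤ d 1 := fun x hx => hsort 1 x le_rfl (Fin.one_le_of_ne_zero hx)
  have hsub : (fun i => if i = 0 then d 0 - 1 else if i = 1 then d 1 - 1 else d i) =
      fun v => d v - if v ∈ s((0 : Fin (n + 2)), 1) then 1 else 0 := by
    funext v
    by_cases hv0 : v = 0 <;> by_cases hv1 : v = 1 <;> simp_all
  rw [hsub]
  exact multigraphicalZ_iff_sub_edge h01 h0 hmax

/-- Loopless multigraph construction step: for `(d 0, d 1 ≥ d 2 ≥ ... ≥ d (n+1))`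
with `d 0 > 0` and `d 1` maximal among the entries after the first, the sequence
is multigraphical iff the sequence with the first two entries decremented is. -/
theorem stmt8 {n : ℕ} (d : Fin (n + 2) → ℤ) (hnn : ∀ i, 0 ≤ d i)
    (h0 : 0 < d 0)
    (hsort : ∀ i j : Fin (n + 2), 1 ≤ i → i ≤ j → d j ≤ d i) :
    MultigraphicalZ d ↔
      MultigraphicalZ (fun i => if i = 0 then d 0 - 1 else if i = 1 then d 1 - 1 else d i) :=
  stmt8_general d h0 hsort
end

section
/- If (d_1,...,d_n) is a multigraphical sequence all of whose entries are positive satisfying (1/2)·Σ d_i ≥ n − 1 (potentially connected), and one edge is added between a vertex of maximum degree and a vertex of minimum positive degree (decrementing both degrees by 1), then the resulting sequence of nonzero remaining degrees is again potentially connected (or the construction is complete). -/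
/-
Adding the edge `ij` lowers the degree sum by exactly 2. If the minimum degree `d j` is 1, vertex
`j` drops out, so at most `n - 1` nonzero entries remain and the old bound `2(n - 1) ≤ Σ d` still
suffices. Otherwise every degree is at least 2, so `Σ d ≥ 2n`, which pays for up to `n` remaining
entries.
-/

open Finset

section DecrementPair

variable {α : Type*} [DecidableEq α]

/-- The degree sequence after joining `i` and `j` by an edge. -/
def decrementPair (d : α → ℕ) (i j : α) (v : α) : ℕ :=
  if v = i ∨ v = j then d v - 1 else d v

variable [Fintype α] {d : α → ℕ} {i j : α}

theorem sum_decrementPair_add_two (hij : i ≠ j) (hi : 0 < d i) (hj : 0 < d j) :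
    ∑ v, decrementPair d i j v + 2 = ∑ v, d v := by
  have hpair : ∑ v, (if v = i ∨ v = j then 1 else 0) = 2 := by
    rw [sum_boole, filter_or, filter_eq', filter_eq', if_pos (mem_univ _), if_pos (mem_univ _),
      card_union_of_disjoint (disjoint_singleton.mpr hij)]
    simp
  rw [← hpair, ← sum_add_distrib]
  refine sum_congr rfl fun v _ => ?_
  unfold decrementPair
  split_ifs with hv
  · rcases hv with rfl | rfl <;> omega
  · rfl

theorem card_support_decrementPair_le_of_eq_one (hj : d j = 1) :
    #{v | decrementPair d i j v ≠ 0} ≤ Fintype.card α - 1 := by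
  have hsub : ({v | decrementPair d i j v ≠ 0} : Finset α) ⊆ univ.erase j := by
    intro v hv
    refine mem_erase.mpr ⟨?_, mem_univ v⟩
    rintro rfl
    rw [mem_filter] at hv
    simp [decrementPair, hj] at hv
  simpa using card_le_card hsub

theorem two_mul_card_support_decrementPair_sub_one_le (hij : i ≠ j) (hj : 0 < d j)
    (hmin : ∀ v, d j ≤ d v) (hconn : 2 * (Fintype.card α - 1) ≤ ∑ v, d v) :
    2 * (#{v | decrementPair d i j v ≠ 0} - 1) ≤ ∑ v, decrementPair d i j v := by
  have hsum := sum_decrementPair_add_two hij (hj.trans_le (hmin i)) hj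
  rcases Nat.lt_or_ge (d j) 2 with hj1 | hj2
  · have := card_support_decrementPair_le_of_eq_one (i := i) (by omega : d j = 1)
    omega
  · have hbig : 2 * Fintype.card α ≤ ∑ v, d v := by
      simpa [mul_comm] using sum_le_sum fun v (_ : v ∈ univ) => hj2.trans (hmin v)
    have := card_le_univ ({v | decrementPair d i j v ≠ 0} : Finset α)
    omega

end DecrementPair

theorem stmt9_general {n : ℕ} (d : Fin n → ℕ)
    (hpos : ∀ v, 0 < d v) (hconn : 2 * (n - 1) ≤ ∑ v, d v)
    (i j : Fin n) (hij : i ≠ j) (hmin : ∀ v, d j ≤ d v) :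
    (∀ v, (if v = i ∨ v = j then d v - 1 else d v) = 0) ∨
      2 * ((Finset.univ.filter
            (fun v => (if v = i ∨ v = j then d v - 1 else d v) ≠ 0)).card - 1) ≤
        ∑ v, (if v = i ∨ v = j then d v - 1 else d v) :=
  Or.inr <| two_mul_card_support_decrementPair_sub_one_le hij (hpos j) hmin
    (by rwa [Fintype.card_fin])

/-- If `d` is a multigraphical sequence with all entries positive and half-sum
at least `n - 1` (potentially connected), and one edge is added between a vertex
`i` of maximum degree and a vertex `j` of minimum (positive) degree, decrementing
both, then either the construction is complete (all remaining degrees zero), or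
the sequence of nonzero remaining degrees is again potentially connected. -/
theorem stmt9 {n : ℕ} (d : Fin n → ℕ)
    (hm : ∃ M : Multiset (Sym2 (Fin n)), (∀ e ∈ M, ¬ e.IsDiag) ∧ ∀ v, mdeg M v = d v)
    (hpos : ∀ v, 0 < d v) (hconn : 2 * (n - 1) ≤ ∑ v, d v)
    (i j : Fin n) (hij : i ≠ j) (hmax : ∀ v, d v ≤ d i) (hmin : ∀ v, d j ≤ d v) :
    (∀ v, (if v = i ∨ v = j then d v - 1 else d v) = 0) ∨
      2 * ((Finset.univ.filter
            (fun v => (if v = i ∨ v = j then d v - 1 else d v) ≠ 0)).card - 1) ≤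
        ∑ v, (if v = i ∨ v = j then d v - 1 else d v) :=
  stmt9_general d hpos hconn i j hij hmin
end

section
/- Smallest-first Havel–Hakimi preserves potential connectedness: Let (d_1,...,d_n), n > 2, be a graphical sequence with all entries positive satisfying (1/2)·Σ d_i ≥ n − 1. Choose a vertex of minimum degree δ as hub and connect all its δ stubs to the δ largest-degree other vertices. Then the remaining sequence of nonzero degrees again has all entries positive and half-sum at least (number of remaining entries) − 1. -/
/-!
Removing a hub of degree `δ` lowers the degree sum by `2δ` and the number of nonzero entries
by `1 + z`, where `z` counts the neighbours of the hub of degree one. If `δ = 1`, then `z ≤ 1`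
and the hypothesis `Σ dᵢ ≥ 2(n - 1)` is enough. If `δ ≥ 2`, minimality of the hub gives `z = 0`
and `Σ dᵢ ≥ nδ ≥ 2(n - 2) + 2δ`, because `(n - 2)(δ - 2) ≥ 0`.
-/

open Finset

theorem Nat.two_mul_add_two_mul_le_mul_add_four {a b : ℕ} (ha : 2 ≤ a) (hb : 2 ≤ b) :
    2 * a + 2 * b ≤ a * b + 4 := by
  nlinarith [Nat.mul_le_mul (Nat.sub_le_sub_right ha 2) (Nat.sub_le_sub_right hb 2)]

section HavelHakimi

variable {α : Type*} [DecidableEq α] (d : α → ℕ) (h : α) (S : Finset α)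

def havelHakimiResidual (v : α) : ℕ :=
  if v = h then 0 else if v ∈ S then d v - 1 else d v

variable {d h S}

theorem havelHakimiResidual_add (hS : ∀ v ∈ S, 0 < d v) (hhS : h ∉ S) (v : α) :
    havelHakimiResidual d h S v + ((if v = h then d h else 0) + if v ∈ S then 1 else 0) = d v := by
  unfold havelHakimiResidual
  by_cases hv : v = h
  · subst hv
    simp [hhS]
  · by_cases hvS : v ∈ S
    · simp only [hv, hvS, if_true, if_false]
      have := hS v hvS
      omega
    · simp [hv, hvS]

variable [Fintype α]

theorem sum_havelHakimiResidual_add (hS : ∀ v ∈ S, 0 < d v) (hhS : h ∉ S) :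
    ∑ v, havelHakimiResidual d h S v + (d h + #S) = ∑ v, d v := by
  rw [← sum_congr rfl fun v _ => havelHakimiResidual_add hS hhS v, sum_add_distrib,
    sum_add_distrib, sum_ite_eq', if_pos (mem_univ h), sum_boole, filter_mem_eq_inter, univ_inter,
    Nat.cast_id]

theorem filter_havelHakimiResidual_eq_zero (hpos : ∀ v, 0 < d v) :
    univ.filter (fun v => havelHakimiResidual d h S v = 0) = insert h (S.filter (d · = 1)) := by
  ext v
  have := hpos v
  unfold havelHakimiResidual
  by_cases hv : v = h
  · simp [hv]
  · by_cases hvS : v ∈ S <;> simp [hv, hvS] <;> omega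

theorem card_support_havelHakimiResidual_add (hpos : ∀ v, 0 < d v) (hhS : h ∉ S) :
    #(univ.filter (fun v => havelHakimiResidual d h S v ≠ 0)) + (#(S.filter (d · = 1)) + 1) =
      Fintype.card α := by
  have hh : h ∉ S.filter (d · = 1) := fun hmem => hhS (mem_filter.mp hmem).1
  rw [← card_insert_of_notMem hh, ← filter_havelHakimiResidual_eq_zero hpos,
    add_comm, card_filter_add_card_filter_not, card_univ]

end HavelHakimi

theorem stmt10_general {n : ℕ} (d : Fin n → ℕ)
    (hpos : ∀ v, 0 < d v) (hconn : 2 * (n - 1) ≤ ∑ v, d v)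
    (h : Fin n) (hmin : ∀ v, d h ≤ d v)
    (S : Finset (Fin n)) (hhS : h ∉ S) (hcard : S.card = d h) :
    (∀ v ∈ Finset.univ.filter
        (fun v => (if v = h then 0 else if v ∈ S then d v - 1 else d v) ≠ 0),
      0 < (if v = h then 0 else if v ∈ S then d v - 1 else d v)) ∧
    2 * ((Finset.univ.filter
          (fun v => (if v = h then 0 else if v ∈ S then d v - 1 else d v) ≠ 0)).card - 1) ≤
      ∑ v, (if v = h then 0 else if v ∈ S then d v - 1 else d v) := by
  refine ⟨fun v hv => Nat.pos_of_ne_zero (mem_filter.mp hv).2, ?_⟩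
  have hsum := sum_havelHakimiResidual_add (fun v _ => hpos v) hhS
  have hsupp := card_support_havelHakimiResidual_add hpos hhS
  have hS : #S < n := by simpa using card_lt_univ_of_notMem hhS
  have hZ : #(S.filter (d · = 1)) ≤ #S := card_filter_le _ _
  rw [Fintype.card_fin] at hsupp
  change 2 * (#(univ.filter fun v => havelHakimiResidual d h S v ≠ 0) - 1) ≤
    ∑ v, havelHakimiResidual d h S v
  obtain hδ | hδ : d h = 1 ∨ 2 ≤ d h := by have := hpos h; omega
  · omega
  · have hZ0 : S.filter (d · = 1) = ∅ :=
      filter_eq_empty_iff.mpr fun v _ => by have := hmin v; omega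
    have hmul : n * d h ≤ ∑ v, d v := by
      simpa using card_nsmul_le_sum univ d (d h) fun v _ => hmin v
    have := Nat.two_mul_add_two_mul_le_mul_add_four (a := n) (b := d h) (by omega) hδ
    rw [hZ0, card_empty] at hsupp
    omega

/-- Smallest-first Havel–Hakimi preserves potential connectedness: let `d` be a
graphical sequence of length `n > 2` with all entries positive and half-sum at
least `n - 1`. Performing a Havel–Hakimi step with a minimum-degree hub `h`
(connecting its `d h` stubs to the `d h` largest-degree other vertices `S`),
the remaining sequence of nonzero degrees again has all entries positive and
half-sum at least (number of remaining entries) − 1. -/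
theorem stmt10 {n : ℕ} (d : Fin n → ℕ) (hn : 2 < n) (hgr : Graphical d)
    (hpos : ∀ v, 0 < d v) (hconn : 2 * (n - 1) ≤ ∑ v, d v)
    (h : Fin n) (hmin : ∀ v, d h ≤ d v)
    (S : Finset (Fin n)) (hhS : h ∉ S) (hcard : S.card = d h)
    (hSmax : ∀ j ∈ S, ∀ k, k ∉ S → k ≠ h → d k ≤ d j) :
    (∀ v ∈ Finset.univ.filter
        (fun v => (if v = h then 0 else if v ∈ S then d v - 1 else d v) ≠ 0),
      0 < (if v = h then 0 else if v ∈ S then d v - 1 else d v)) ∧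
    2 * ((Finset.univ.filter
          (fun v => (if v = h then 0 else if v ∈ S then d v - 1 else d v) ≠ 0)).card - 1) ≤
      ∑ v, (if v = h then 0 else if v ∈ S then d v - 1 else d v) :=
  stmt10_general d hpos hconn h hmin S hhS hcard
end

section
/- If a potentially connected sequence (all entries positive, half-sum ≥ n − 1) of length n > 2 undergoes a smallest-first Havel–Hakimi step, then the number of vertices with nonzero remaining degree decreases by exactly one. -/
/-!
Only the hub's neighbours lose degree, each by one, so it suffices that every neighbour has
degree at least `2`. Since `n > 2`, the degree sum `≥ 2(n - 1)` exceeds `n`, so some vertex has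
degree at least `2`. Then so does every neighbour: with two neighbours the minimum degree `d h`
is already `≥ 2`, and otherwise the single neighbour has the largest degree outside the hub.
-/

open Finset

/-- Degrees left after a Havel–Hakimi step with hub `h` joined to the vertices of `S`. -/
def residualDegree {α : Type*} [DecidableEq α] (d : α → ℕ) (h : α) (S : Finset α) (v : α) : ℕ :=
  if v = h then 0 else if v ∈ S then d v - 1 else d v

lemma exists_two_le_of_card_lt_sum {α : Type*} [Fintype α] (d : α → ℕ)
    (hsum : Fintype.card α < ∑ v, d v) : ∃ v, 2 ≤ d v := by
  by_contra! hle
  have : ∑ v, d v ≤ Fintype.card α • 1 :=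
    Finset.sum_le_card_nsmul _ _ _ fun v _ => Nat.le_of_lt_succ (hle v)
  simp only [smul_eq_mul, mul_one] at this
  omega

lemma two_le_of_mem_of_exists_two_le {α : Type*} (d : α → ℕ) {h : α} {S : Finset α}
    (hmin : ∀ v, d h ≤ d v) (hcard : S.card = d h)
    (hSmax : ∀ j ∈ S, ∀ k, k ∉ S → k ≠ h → d k ≤ d j)
    {v : α} (hv : 2 ≤ d v) {j : α} (hj : j ∈ S) : 2 ≤ d j := by
  by_cases hvS : v ∈ S
  · by_cases hvj : v = j
    · exact hvj ▸ hv
    · have : 1 < S.card := Finset.one_lt_card.mpr ⟨v, hvS, j, hj, hvj⟩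
      have := hmin j
      omega
  · by_cases hvh : v = h
    · exact hv.trans (hvh ▸ hmin j)
    · exact hv.trans (hSmax j hj v hvS hvh)

lemma residualDegree_ne_zero_iff {α : Type*} [DecidableEq α] {d : α → ℕ} {h : α}
    {S : Finset α} (hpos : ∀ v, 0 < d v) (hS : ∀ j ∈ S, 2 ≤ d j) (v : α) :
    residualDegree d h S v ≠ 0 ↔ v ≠ h := by
  unfold residualDegree
  by_cases hvh : v = h
  · simp [hvh]
  · by_cases hvS : v ∈ S
    · have := hS v hvS
      simp only [hvh, hvS, if_false, if_true, ne_eq, not_false_eq_true, iff_true]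
      omega
    · simp [hvh, hvS, (hpos v).ne']

theorem stmt11_general {n : ℕ} (d : Fin n → ℕ) (hn : 2 < n)
    (hpos : ∀ v, 0 < d v) (hconn : 2 * (n - 1) ≤ ∑ v, d v)
    (h : Fin n) (hmin : ∀ v, d h ≤ d v)
    (S : Finset (Fin n)) (hcard : S.card = d h)
    (hSmax : ∀ j ∈ S, ∀ k, k ∉ S → k ≠ h → d k ≤ d j) :
    (Finset.univ.filter
        (fun v => (if v = h then 0 else if v ∈ S then d v - 1 else d v) ≠ 0)).card
      = n - 1 := by
  change (univ.filter fun v => residualDegree d h S v ≠ 0).card = n - 1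
  obtain ⟨v, hv⟩ : ∃ v, 2 ≤ d v :=
    exists_two_le_of_card_lt_sum d (by rw [Fintype.card_fin]; omega)
  have hS : ∀ j ∈ S, 2 ≤ d j := fun j hj =>
    two_le_of_mem_of_exists_two_le d hmin hcard hSmax hv hj
  have hsupport : univ.filter (fun v => residualDegree d h S v ≠ 0) = {h}ᶜ := by
    ext v
    simp [residualDegree_ne_zero_iff hpos hS]
  rw [hsupport, card_compl, card_singleton, Fintype.card_fin]

/-- If a potentially connected sequence (all entries positive, half-sum at least
`n - 1`) of length `n > 2` undergoes a smallest-first Havel–Hakimi step (hub `h`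
of minimum degree connected to the `d h` largest-degree other vertices `S`),
then the number of vertices with nonzero remaining degree is exactly `n - 1`:
it decreases by exactly one. -/
theorem stmt11 {n : ℕ} (d : Fin n → ℕ) (hn : 2 < n)
    (hpos : ∀ v, 0 < d v) (hconn : 2 * (n - 1) ≤ ∑ v, d v)
    (h : Fin n) (hmin : ∀ v, d h ≤ d v)
    (S : Finset (Fin n)) (hhS : h ∉ S) (hcard : S.card = d h)
    (hSmax : ∀ j ∈ S, ∀ k, k ∉ S → k ≠ h → d k ≤ d j) :
    (Finset.univ.filter
        (fun v => (if v = h then 0 else if v ∈ S then d v - 1 else d v) ≠ 0)).card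
      = n - 1 :=
  stmt11_general d hn hpos hconn h hmin S hcard hSmax
end

section
/- Star-constrained graphicality: Let d_1 = Δ ≥ d_2 ≥ ... ≥ d_n be a degree sequence and X ⊆ {2,...,n} a set of forbidden neighbours for vertex 1 with |X| ≤ n − 1 − Δ. Connect vertex 1 to the Δ largest-degree vertices not in X, obtaining a remaining sequence d'. Then there exists a simple realization of (d_1,...,d_n) in which vertex 1 has no neighbour in X if and only if d' is graphical. -/
/-!
Both directions pass through realizations of `d` in which the neighbourhood of the hub is
exactly `B`: deleting the star from the hub to `B` turns such a realization into one of the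
remaining sequence, and adding it back inverts this. To move the hub's neighbourhood onto `B`
in a realization avoiding `X`, pick `a ∈ N(0) \ B` and `b ∈ B \ N(0)`. As `d a ≤ d b` while `a`
is adjacent to the hub and `b` is not, `b` has a neighbour `c ≠ a` outside `N(a)`, and the
2-switch `0a, bc ↦ 0b, ac` keeps all degrees, keeps `N(0)` off `X`, and shrinks `B \ N(0)`.
-/

/-- A sequence of integers is graphical if some finite simple graph realizes
it as its degree sequence (in particular all entries are nonnegative). -/
def GraphicalZ {m : ℕ} (d : Fin m → ℤ) : Prop :=
  ∃ G : SimpleGraph (Fin m), ∀ v, ((G.neighborSet v).ncard : ℤ) = d v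

namespace SimpleGraph

variable {V : Type*}

def Realizes (G : SimpleGraph V) (d : V → ℤ) : Prop :=
  ∀ v, ((G.neighborSet v).ncard : ℤ) = d v

def switch (G : SimpleGraph V) (v a b c : V) : SimpleGraph V :=
  G.deleteEdges {s(v, a), s(b, c)} ⊔ fromEdgeSet {s(v, b), s(a, c)}

section switch

variable {G : SimpleGraph V} {v a b c : V}

lemma neighborSet_switch_self (hva : G.Adj v a) (hvb : ¬ G.Adj v b) (hbc : G.Adj b c)
    (hvb' : v ≠ b) :
    (G.switch v a b c).neighborSet v = insert b (G.neighborSet v \ {a}) := by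
  have hvc : v ≠ c := by rintro rfl; exact hvb hbc.symm
  ext u
  simp only [switch, mem_neighborSet, sup_adj, deleteEdges_adj, fromEdgeSet_adj, Set.mem_insert_iff,
    Set.mem_singleton_iff, Set.mem_sdiff, Sym2.eq_iff]
  grind [G.ne_of_adj hva]

lemma ncard_neighborSet_switch (hva : G.Adj v a) (hvb : ¬ G.Adj v b) (hbc : G.Adj b c)
    (hac : ¬ G.Adj a c) (hvb' : v ≠ b) (hac' : a ≠ c) (x : V) :
    ((G.switch v a b c).neighborSet x).ncard = (G.neighborSet x).ncard := by
  have hva' := G.ne_of_adj hva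
  have hbc' := G.ne_of_adj hbc
  have hvc : v ≠ c := by rintro rfl; exact hvb hbc.symm
  have hab : a ≠ b := by rintro rfl; exact hvb hva
  have exchange : ∀ y z, y ∉ G.neighborSet x → z ∈ G.neighborSet x →
      (G.switch v a b c).neighborSet x = insert y (G.neighborSet x \ {z}) →
      ((G.switch v a b c).neighborSet x).ncard = (G.neighborSet x).ncard :=
    fun y z hy hz h => h ▸ Set.ncard_exchange hy hz
  have key : ∀ u, (G.switch v a b c).Adj x u ↔
      (G.Adj x u ∧ ¬ (s(x, u) = s(v, a) ∨ s(x, u) = s(b, c))) ∨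
        ((s(x, u) = s(v, b) ∨ s(x, u) = s(a, c)) ∧ x ≠ u) :=
    fun u => by simp [switch]
  by_cases hxv : x = v
  · subst hxv
    exact exchange b a hvb hva (neighborSet_switch_self hva hvb hbc hvb')
  by_cases hxa : x = a
  · subst hxa
    refine exchange c v hac hva.symm (Set.ext fun u => ?_)
    simp only [mem_neighborSet, key, Set.mem_insert_iff, Set.mem_sdiff, Set.mem_singleton_iff,
      Sym2.eq_iff]
    grind
  by_cases hxb : x = b
  · subst hxb
    refine exchange v c (mt G.adj_symm hvb) hbc (Set.ext fun u => ?_)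
    simp only [mem_neighborSet, key, Set.mem_insert_iff, Set.mem_sdiff, Set.mem_singleton_iff,
      Sym2.eq_iff]
    grind
  by_cases hxc : x = c
  · subst hxc
    refine exchange a b (mt G.adj_symm hac) hbc.symm (Set.ext fun u => ?_)
    simp only [mem_neighborSet, key, Set.mem_insert_iff, Set.mem_sdiff, Set.mem_singleton_iff,
      Sym2.eq_iff]
    grind
  congr 1
  ext u
  simp only [mem_neighborSet, key, Sym2.eq_iff]
  grind


lemma exists_adj_not_adj_of_ncard_le [Finite V] (hva : G.Adj v a) (hvb : ¬ G.Adj v b)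
    (hvb' : v ≠ b) (hdeg : (G.neighborSet a).ncard ≤ (G.neighborSet b).ncard) :
    ∃ c, G.Adj b c ∧ ¬ G.Adj a c ∧ a ≠ c := by
  by_contra! h
  have hssub : G.neighborSet b \ {a} ⊂ G.neighborSet a \ {b} := by
    refine (Set.ssubset_iff_of_subset ?_).2 ⟨v, ⟨hva.symm, hvb'⟩, fun hv => hvb hv.1.symm⟩
    rintro c ⟨hbc, hca⟩
    exact ⟨not_not.1 fun hac => hca (h c hbc hac).symm, (G.ne_of_adj hbc).symm⟩
  have hlt := Set.ncard_lt_ncard hssub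
  by_cases hab : G.Adj a b
  · rw [Set.ncard_sdiff_singleton_of_mem ((G.mem_neighborSet b a).2 hab.symm),
      Set.ncard_sdiff_singleton_of_mem ((G.mem_neighborSet a b).2 hab)] at hlt
    omega
  · rw [Set.sdiff_singleton_eq_self (s := G.neighborSet b) (mt G.adj_symm hab),
      Set.sdiff_singleton_eq_self (s := G.neighborSet a) hab] at hlt
    omega

end switch

theorem exists_neighborSet_eq_of_ncard_le [Finite V] (G : SimpleGraph V) (v : V) (B : Set V)
    (hvB : v ∉ B) (hcard : B.ncard = (G.neighborSet v).ncard)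
    (hle : ∀ a ∈ G.neighborSet v \ B, ∀ b ∈ B \ G.neighborSet v,
      (G.neighborSet a).ncard ≤ (G.neighborSet b).ncard) :
    ∃ G' : SimpleGraph V,
      (∀ x, (G'.neighborSet x).ncard = (G.neighborSet x).ncard) ∧ G'.neighborSet v = B := by
  by_cases hsub : B ⊆ G.neighborSet v
  · exact ⟨G, fun _ => rfl, (Set.eq_of_subset_of_ncard_le hsub hcard.ge).symm⟩
  obtain ⟨b, hbB, hbN⟩ := Set.not_subset.1 hsub
  obtain ⟨a, haN, haB⟩ : ∃ a ∈ G.neighborSet v, a ∉ B := by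
    by_contra! hNB
    exact hbN (Set.eq_of_subset_of_ncard_le hNB hcard.le ▸ hbB)
  have hvb : v ≠ b := fun h => hvB (h ▸ hbB)
  obtain ⟨c, hbc, hac, hac'⟩ :=
    exists_adj_not_adj_of_ncard_le haN hbN hvb (hle a ⟨haN, haB⟩ b ⟨hbB, hbN⟩)
  have hdeg := ncard_neighborSet_switch haN hbN hbc hac hvb hac'
  have hN := neighborSet_switch_self haN hbN hbc hvb (c := c)
  have hNB : (G.switch v a b c).neighborSet v \ B ⊆ G.neighborSet v \ B := by
    rw [hN]
    rintro x ⟨rfl | hx, hxB⟩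
    exacts [absurd hbB hxB, ⟨hx.1, hxB⟩]
  have hBN : B \ (G.switch v a b c).neighborSet v = (B \ G.neighborSet v) \ {b} := by
    rw [hN]
    ext x
    simp only [Set.mem_sdiff, Set.mem_insert_iff, Set.mem_singleton_iff]
    grind
  have hdecr : (B \ (G.switch v a b c).neighborSet v).ncard < (B \ G.neighborSet v).ncard := by
    rw [hBN]
    exact Set.ncard_sdiff_singleton_lt_of_mem ⟨hbB, hbN⟩
  obtain ⟨G', hdeg', hN'⟩ := exists_neighborSet_eq_of_ncard_le (G.switch v a b c) v B hvB
    (hcard.trans (hdeg v).symm) fun x hx y hy => by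
      rw [hdeg, hdeg]
      exact hle x (hNB hx) y (hBN ▸ hy).1
  exact ⟨G', fun x => (hdeg' x).trans (hdeg x), hN'⟩
termination_by (B \ G.neighborSet v).ncard

theorem Realizes.not_adj_of_eq_zero [Finite V] {H : SimpleGraph V} {d : V → ℤ} {v : V}
    (hH : H.Realizes d) (hv : d v = 0) (w : V) : ¬ H.Adj v w := by
  refine Set.eq_empty_iff_forall_notMem.1 ((Set.ncard_eq_zero (s := H.neighborSet v)).1 ?_) w
  have := hH v
  omega

def starGraphOn (v : V) (B : Set V) : SimpleGraph V :=
  fromRel fun x y => x = v ∧ y ∈ B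

variable [DecidableEq V]

def remainingDegrees (d : V → ℤ) (v : V) (B : Finset V) : V → ℤ :=
  fun u => if u = v then 0 else if u ∈ B then d u - 1 else d u

theorem Realizes.deleteIncidenceSet [Finite V] {G : SimpleGraph V} {d : V → ℤ} {v : V}
    {B : Finset V} (hG : G.Realizes d) (hN : G.neighborSet v = B) :
    (G.deleteIncidenceSet v).Realizes (remainingDegrees d v B) := by
  intro u
  have hNu : (G.deleteIncidenceSet v).neighborSet u =
      if u = v then ∅ else G.neighborSet u \ {v} := by
    ext w
    split_ifs with hu <;> simp [deleteIncidenceSet_adj, hu]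
  have hvu : v ∈ G.neighborSet u ↔ u ∈ B := by
    rw [mem_neighborSet, adj_comm, ← mem_neighborSet, hN, Finset.mem_coe]
  have hGu := hG u
  rw [hNu, remainingDegrees]
  split_ifs with hu huB
  · simp
  · have := Set.ncard_sdiff_singleton_add_one (hvu.2 huB)
    omega
  · rwa [Set.sdiff_singleton_eq_self (mt hvu.1 huB)]

theorem neighborSet_sup_starGraphOn [Finite V] {H : SimpleGraph V} {d : V → ℤ} {v : V} {B : Finset V}
    (hH : H.Realizes (remainingDegrees d v B)) (hvB : v ∉ B) (u : V) :
    (H ⊔ starGraphOn v B).neighborSet u =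
      if u = v then ↑B else if u ∈ B then insert v (H.neighborSet u) else H.neighborSet u := by
  have hHv := hH.not_adj_of_eq_zero (v := v) (by simp [remainingDegrees])
  ext w
  split_ifs with hu huB
  · subst hu
    simp only [mem_neighborSet, sup_adj, starGraphOn, fromRel_adj, hHv, Finset.mem_coe]
    grind
  · simp only [mem_neighborSet, sup_adj, starGraphOn, fromRel_adj, Set.mem_insert_iff]
    grind [H.adj_symm]
  · simp only [mem_neighborSet, sup_adj, starGraphOn, fromRel_adj]
    grind

theorem Realizes.sup_starGraphOn [Finite V] {H : SimpleGraph V} {d : V → ℤ} {v : V} {B : Finset V}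
    (hH : H.Realizes (remainingDegrees d v B)) (hvB : v ∉ B) (hB : (B.card : ℤ) = d v) :
    (H ⊔ starGraphOn v B).Realizes d := by
  intro u
  have hHu := hH u
  rw [neighborSet_sup_starGraphOn hH hvB u]
  rw [remainingDegrees] at hHu
  split_ifs at hHu ⊢ with hu huB
  · simpa [hu] using hB
  · have hvu : v ∉ H.neighborSet u := fun h =>
      hH.not_adj_of_eq_zero (by simp [remainingDegrees]) u (H.adj_symm h)
    rw [Set.ncard_insert_of_notMem hvu]
    push_cast
    omega
  · exact hHu

end SimpleGraph

theorem stmt14_general {n : ℕ} (d : Fin (n + 1) → ℤ)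
    (X : Finset (Fin (n + 1)))
    (B : Finset (Fin (n + 1))) (h0B : 0 ∉ B) (hBX : Disjoint B X)
    (hBcard : (B.card : ℤ) = d 0)
    (hBmax : ∀ j ∈ B, ∀ k, k ∉ B → k ∉ X → k ≠ 0 → d k ≤ d j) :
    (∃ G : SimpleGraph (Fin (n + 1)),
        (∀ v, ((G.neighborSet v).ncard : ℤ) = d v) ∧ ∀ x ∈ X, ¬ G.Adj 0 x) ↔
      GraphicalZ (fun v => if v = 0 then 0 else if v ∈ B then d v - 1 else d v) := by
  constructor
  · rintro ⟨G, hG, hGX⟩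
    have hcard : (B : Set (Fin (n + 1))).ncard = (G.neighborSet 0).ncard := by
      have := hG 0
      rw [Set.ncard_coe_finset]
      omega
    obtain ⟨G', hdeg, hN⟩ := G.exists_neighborSet_eq_of_ncard_le 0 B (by simpa) hcard
      fun a ⟨ha0, haB⟩ b ⟨hbB, _⟩ => by
        have := hBmax b hbB a haB (fun haX => hGX a haX ha0) (G.ne_of_adj ha0).symm
        have := hG a
        have := hG b
        omega
    have hG' : G'.Realizes d := fun u => (hdeg u).symm ▸ hG u
    exact ⟨_, hG'.deleteIncidenceSet hN⟩
  · rintro ⟨H, hH⟩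
    refine ⟨_, SimpleGraph.Realizes.sup_starGraphOn hH h0B hBcard, fun x hxX hx => ?_⟩
    rw [← SimpleGraph.mem_neighborSet, SimpleGraph.neighborSet_sup_starGraphOn hH h0B, if_pos rfl] at hx
    exact Finset.disjoint_left.1 hBX hx hxX

/-- Star-constrained graphicality: let `d 0 = Δ ≥ d 1 ≥ ... ≥ d n` be a degree
sequence and `X` a set of forbidden neighbours for vertex `0` with
`|X| ≤ n - Δ`. Let `B` be a set of `Δ` largest-degree vertices other than `0`
and outside `X` (ties broken arbitrarily). There is a simple realization of `d`
in which vertex `0` has no neighbour in `X` iff the remaining sequence, obtained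
by zeroing the hub degree and decrementing the degrees of `B`, is graphical. -/
theorem stmt14 {n : ℕ} (d : Fin (n + 1) → ℤ) (hnn : ∀ i, 0 ≤ d i)
    (hsort : ∀ i j : Fin (n + 1), i ≤ j → d j ≤ d i)
    (X : Finset (Fin (n + 1))) (h0X : 0 ∉ X) (hX : (X.card : ℤ) ≤ (n : ℤ) - d 0)
    (B : Finset (Fin (n + 1))) (h0B : 0 ∉ B) (hBX : Disjoint B X)
    (hBcard : (B.card : ℤ) = d 0)
    (hBmax : ∀ j ∈ B, ∀ k, k ∉ B → k ∉ X → k ≠ 0 → d k ≤ d j) :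
    (∃ G : SimpleGraph (Fin (n + 1)),
        (∀ v, ((G.neighborSet v).ncard : ℤ) = d v) ∧ ∀ x ∈ X, ¬ G.Adj 0 x) ↔
      GraphicalZ (fun v => if v = 0 then 0 else if v ∈ B then d v - 1 else d v) :=
  stmt14_general d X B h0B hBX hBcard hBmax
end

section
/- Threshold property of star-constrained graphicality: with notation as in the star-constrained graphicality theorem, there is a threshold degree d_th such that connecting a stub of the hub vertex to an allowed vertex of remaining degree d preserves the possibility of completing a simple realization if and only if d ≥ d_th. Formally: if connecting the hub to an allowed vertex v preserves graphicality of the residual constrained sequence, then connecting it instead to any allowed vertex of remaining degree ≥ deg(v) also preserves it. -/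
/-!
Let `G` realize the residual sequence for `v`; in `G` the hub is not adjacent to `v`, and
`deg w = d w > d v - 1 = deg v`. Pick an edge `w c` with `c` not adjacent to `v`: take `c = hub` if
the hub is already adjacent to `w`, and otherwise a neighbour of `w` outside the closed
neighbourhood of `v`, which exists by the degree inequality. Sliding the endpoint `w` of that edge
over to `v` lowers `deg w` and raises `deg v` by one, keeps every other degree, and leaves the hub
without neighbours in `insert w X`: the result realizes the residual sequence for `w`.
-/

/-- `StarGraphical d hub X`: the degree sequence `d` has a simple realization
in which `hub` has no neighbour in the exclusion set `X`. -/
def StarGraphical {n : ℕ} (d : Fin n → ℕ) (hub : Fin n) (X : Finset (Fin n)) : Prop :=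
  ∃ G : SimpleGraph (Fin n),
    (∀ v, (G.neighborSet v).ncard = d v) ∧ ∀ x ∈ X, ¬ G.Adj hub x

namespace SimpleGraph

variable {V : Type*} (G : SimpleGraph V)

def moveEdge (a b c : V) : SimpleGraph V := G \ edge a c ⊔ edge b c

variable {G} {a b c : V}

lemma moveEdge_adj {x y : V} :
    (G.moveEdge a b c).Adj x y ↔
      G.Adj x y ∧ ¬(x = a ∧ y = c ∨ x = c ∧ y = a) ∨ (x = b ∧ y = c ∨ x = c ∧ y = b) ∧ x ≠ y := by
  simp only [moveEdge, sup_adj, sdiff_adj, edge_adj]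
  have := G.ne_of_adj (a := x) (b := y)
  tauto

lemma ncard_neighborSet_moveEdge [Finite V] [DecidableEq V] (hac : G.Adj a c) (hbc : ¬G.Adj b c)
    (hb : b ≠ c) (hab : a ≠ b) (x : V) :
    ((G.moveEdge a b c).neighborSet x).ncard =
      if x = a then (G.neighborSet x).ncard - 1
      else if x = b then (G.neighborSet x).ncard + 1 else (G.neighborSet x).ncard := by
  have hca : c ∈ G.neighborSet a := hac
  have hac' : a ∈ G.neighborSet c := hac.symm
  have hbc' : c ∉ G.neighborSet b := hbc
  split_ifs with hxa hxb
  · subst hxa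
    have hN : (G.moveEdge x b c).neighborSet x = G.neighborSet x \ {c} := by
      ext y; simp [moveEdge_adj, hab, hac.ne]
    rw [hN, Set.ncard_sdiff_singleton_of_mem hca]
  · subst hxb
    have hN : (G.moveEdge a x c).neighborSet x = insert c (G.neighborSet x) := by
      ext y; grind [mem_neighborSet, moveEdge_adj]
    rw [hN, Set.ncard_insert_of_notMem hbc']
  · by_cases hxc : x = c
    · subst hxc
      have hN : (G.moveEdge a b x).neighborSet x = insert b (G.neighborSet x \ {a}) := by
        ext y; grind [mem_neighborSet, moveEdge_adj]
      have hpos := (Set.ncard_pos (Set.toFinite _)).2 ⟨a, hac'⟩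
      rw [hN, Set.ncard_insert_of_notMem (fun h => hbc h.1.symm),
        Set.ncard_sdiff_singleton_of_mem hac']
      omega
    · congr 1
      ext y; grind [mem_neighborSet, moveEdge_adj]

lemma exists_adj_not_adj_of_ncard_neighborSet_lt [Finite V] {v w : V}
    (h : (G.neighborSet v).ncard < (G.neighborSet w).ncard) :
    ∃ c, G.Adj w c ∧ ¬G.Adj v c ∧ c ≠ v := by
  by_contra! hcon
  by_cases hvw : G.Adj v w
  · have hsub : G.neighborSet w \ {v} ⊆ G.neighborSet v \ {w} := fun c ⟨hwc, hcv⟩ =>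
      ⟨by_contra fun hvc => hcv (hcon c hwc hvc), (G.ne_of_adj hwc).symm⟩
    have hle := Set.ncard_le_ncard hsub
    rw [Set.ncard_sdiff_singleton_of_mem (show v ∈ G.neighborSet w from hvw.symm),
      Set.ncard_sdiff_singleton_of_mem (show w ∈ G.neighborSet v from hvw)] at hle
    have := (Set.ncard_pos (Set.toFinite _)).2 ⟨w, show w ∈ G.neighborSet v from hvw⟩
    omega
  · have hsub : G.neighborSet w ⊆ G.neighborSet v := fun c hwc =>
      by_contra fun hvc => hvw (hcon c hwc hvc ▸ hwc).symm
    exact (Set.ncard_le_ncard hsub).not_gt h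

end SimpleGraph

open SimpleGraph

def hubResidual {n : ℕ} (d : Fin n → ℕ) (hub v : Fin n) : Fin n → ℕ :=
  fun z => if z = hub then d hub - 1 else if z = v then d v - 1 else d z

theorem starGraphical_hubResidual_moveEdge {n : ℕ} {d : Fin n → ℕ} {hub v w c : Fin n}
    {X : Finset (Fin n)} {G : SimpleGraph (Fin n)}
    (hdeg : ∀ z, (G.neighborSet z).ncard = hubResidual d hub v z)
    (hX : ∀ x ∈ insert v X, ¬G.Adj hub x) (hvX : v ∉ X) (hvh : v ≠ hub) (hwh : w ≠ hub)
    (hvw : v ≠ w) (hvpos : 0 < d v) (hwc : G.Adj w c) (hvc : ¬G.Adj v c) (hcv : c ≠ v)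
    (hhubw : G.Adj hub w → c = hub) :
    StarGraphical (hubResidual d hub w) hub (insert w X) := by
  refine ⟨G.moveEdge w v c, fun z => ?_, fun x hx hadj => ?_⟩
  · rw [ncard_neighborSet_moveEdge hwc hvc hcv.symm hvw.symm, hdeg]
    unfold hubResidual
    grind
  · rw [moveEdge_adj] at hadj
    rcases Finset.mem_insert.1 hx with rfl | hxX
    · rcases hadj with ⟨hhx, hne⟩ | ⟨hvc | hcv, -⟩
      · exact hne (Or.inr ⟨(hhubw hhx).symm, rfl⟩)
      · exact hvh hvc.1.symm
      · exact hvw hcv.2.symm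
    · rcases hadj with ⟨hhx, -⟩ | ⟨hvc | hcv, -⟩
      · exact hX x (Finset.mem_insert_of_mem hxX) hhx
      · exact hvh hvc.1.symm
      · exact hvX (hcv.2 ▸ hxX)

theorem stmt15_general {n : ℕ} (d : Fin n → ℕ) (hub : Fin n) (X : Finset (Fin n))
    (v w : Fin n)
    (hvX : v ∉ X) (hvh : v ≠ hub) (hwh : w ≠ hub)
    (hvpos : 0 < d v) (hle : d v ≤ d w)
    (hv : StarGraphical
        (fun z => if z = hub then d hub - 1 else if z = v then d v - 1 else d z)
        hub (insert v X)) :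
    StarGraphical
        (fun z => if z = hub then d hub - 1 else if z = w then d w - 1 else d z)
        hub (insert w X) := by
  obtain rfl | hvw := eq_or_ne v w
  · exact hv
  obtain ⟨G, hdeg, hX⟩ := hv
  obtain ⟨c, hwc, hvc, hcv, hhubw⟩ :
      ∃ c, G.Adj w c ∧ ¬G.Adj v c ∧ c ≠ v ∧ (G.Adj hub w → c = hub) := by
    by_cases hhw : G.Adj hub w
    · exact ⟨hub, hhw.symm, fun h => hX v (Finset.mem_insert_self v X) h.symm, hvh.symm,
        fun _ => rfl⟩
    · have hlt : (G.neighborSet v).ncard < (G.neighborSet w).ncard := by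
        rw [hdeg, hdeg]; simp only [if_neg hvh, if_neg hwh, if_neg hvw.symm, if_pos]; omega
      obtain ⟨c, hwc, hvc, hcv⟩ := exists_adj_not_adj_of_ncard_neighborSet_lt hlt
      exact ⟨c, hwc, hvc, hcv, fun h => absurd h hhw⟩
  exact starGraphical_hubResidual_moveEdge hdeg hX hvX hvh hwh hvw hvpos hwc hvc hcv hhubw

/-- Threshold property of star-constrained graphicality: if connecting a stub of
the hub to an allowed vertex `v` (decrementing both degrees and adding `v` to the
exclusion set) preserves star-constrained graphicality, then connecting it
instead to any allowed vertex `w` of remaining degree at least `d v` also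
preserves it. -/
theorem stmt15 {n : ℕ} (d : Fin n → ℕ) (hub : Fin n) (X : Finset (Fin n))
    (hhX : hub ∉ X) (hhub : 0 < d hub) (v w : Fin n)
    (hvX : v ∉ X) (hvh : v ≠ hub) (hwX : w ∉ X) (hwh : w ≠ hub)
    (hvpos : 0 < d v) (hle : d v ≤ d w)
    (hv : StarGraphical
        (fun z => if z = hub then d hub - 1 else if z = v then d v - 1 else d z)
        hub (insert v X)) :
    StarGraphical
        (fun z => if z = hub then d hub - 1 else if z = w then d w - 1 else d z)
        hub (insert w X) :=
  stmt15_general d hub X v w hvX hvh hwh hvpos hle hv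
end
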